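/- arXiv:1704.05515 — 2 statements merged into one kernel-verified Lean document; each statement's English description precedes it below -/
import Mathlib

section
/- Let G be a finite group and 1 → R → F → G → 1 a presentation with F a free group of finite rank and R a normal subgroup of F. Then R/[R,F] is torsion-free if and only if H₂(G, ℤ) = 0, i.e., if and only if the Schur multiplier of G is trivial. -/
/-!
By Hopf's formula `H₂(G, ℤ) ≅ (R ∩ [F, F]) / [R, F]`, and inside `R / [R, F]` this subgroup
is exactly the torsion. If `r ^ n ∈ [R, F] ≤ [F, F]` then `r ∈ [F, F]`, because the
abelianization of `F` is free abelian. Conversely `R / [R, F]` is central in `F / [R, F]`,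
with finite index since `G` is finite, so the transfer to the centre kills `[F, F] / [R, F]`
after raising to the power of that index.

Vanishing of `(R ∩ [F, F]) / [R, F]` does not depend on the presentation: two presentations of
`G` lift to each other, and two lifts of the same map to `G` agree modulo `[R, F]` on commutators
because they differ by elements of the central subgroup `R / [R, F]`.
-/

/-- The subgroup `[ker π, F]` of the free group `F`. -/
def relComm {X G : Type} [Group G] (π : FreeGroup X →* G) : Subgroup (FreeGroup X) :=
  ⁅π.ker, (⊤ : Subgroup (FreeGroup X))⁆

instance {X G : Type} [Group G] (π : FreeGroup X →* G) : (relComm π).Normal :=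
  Subgroup.commutator_normal _ _

/-- `R/[R,F]`, realized as the image of `R = ker π` in `F/[R,F]`. -/
def relCoinv {X G : Type} [Group G] (π : FreeGroup X →* G) :
    Subgroup (FreeGroup X ⧸ relComm π) :=
  Subgroup.map (QuotientGroup.mk' (relComm π)) π.ker

/-- The kernel of the canonical presentation `FreeGroup G → G`. -/
def hopfKer (G : Type) [Group G] : Subgroup (FreeGroup G) :=
  (FreeGroup.lift (id : G → G)).ker

/-- `H₂(G, ℤ)` via Hopf's formula, for the canonical presentation `FreeGroup G → G`. -/
def H2Z (G : Type) [Group G] :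
    Subgroup (FreeGroup G ⧸ relComm (FreeGroup.lift (id : G → G))) :=
  Subgroup.map (QuotientGroup.mk' (relComm (FreeGroup.lift (id : G → G))))
    (hopfKer G ⊓ commutator (FreeGroup G))

open scoped commutatorElement

instance FreeAbelianGroup.instIsAddTorsionFree (X : Type*) :
    IsAddTorsionFree (FreeAbelianGroup X) :=
  Function.Injective.isAddTorsionFree (FreeAbelianGroup.equivFinsupp X).toAddMonoidHom
    (FreeAbelianGroup.equivFinsupp X).injective

instance Abelianization.instIsMulTorsionFreeFreeGroup (X : Type*) :
    IsMulTorsionFree (Abelianization (FreeGroup X)) :=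
  inferInstanceAs (IsMulTorsionFree (Multiplicative (FreeAbelianGroup X)))

theorem FreeGroup.exists_comp_eq_of_surjective {Y M G : Type*} [Group M] [Group G]
    (f : M →* G) (hf : Function.Surjective f) (τ : FreeGroup Y →* G) :
    ∃ φ : FreeGroup Y →* M, f.comp φ = τ :=
  ⟨FreeGroup.lift fun y => (hf (τ (FreeGroup.of y))).choose,
    FreeGroup.ext_hom _ _ fun y => by simpa using (hf (τ (FreeGroup.of y))).choose_spec⟩

section Commutator

variable {H Q : Type*} [Group H] [Group Q]

theorem map_mem_commutator (f : H →* Q) {g : H} (hg : g ∈ commutator H) :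
    f g ∈ commutator Q := by
  suffices commutator H ≤ (commutator Q).comap f from this hg
  rw [commutator_def, Subgroup.commutator_le]
  intro a _ b _
  rw [Subgroup.mem_comap, map_commutatorElement]
  exact Subgroup.commutator_mem_commutator (Subgroup.mem_top _) (Subgroup.mem_top _)

theorem commutatorElement_mul_mem_center (x y : Q) {z w : Q} (hz : z ∈ Subgroup.center Q)
    (hw : w ∈ Subgroup.center Q) : ⁅x * z, y * w⁆ = ⁅x, y⁆ := by
  have hz' : ∀ g, Commute z g := fun g => (Subgroup.mem_center_iff.mp hz g).symm
  have hw' : ∀ g, Commute w g := fun g => (Subgroup.mem_center_iff.mp hw g).symm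
  calc ⁅x * z, y * w⁆ = x * (z * (y * w) * z⁻¹) * x⁻¹ * (y * w)⁻¹ := by group
    _ = x * y * (w * x⁻¹ * w⁻¹) * y⁻¹ := by rw [(hz' _).mul_inv_cancel]; group
    _ = ⁅x, y⁆ := by rw [(hw' _).mul_inv_cancel, commutatorElement_def]

theorem commutator_le_eqLocus_of_inv_mul_mem_center (α β : H →* Q)
    (h : ∀ v, (β v)⁻¹ * α v ∈ Subgroup.center Q) : commutator H ≤ α.eqLocus β := by
  rw [commutator_def, Subgroup.commutator_le]
  intro a _ b _
  show α ⁅a, b⁆ = β ⁅a, b⁆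
  rw [map_commutatorElement, map_commutatorElement, ← mul_inv_cancel_left (β a) (α a),
    ← mul_inv_cancel_left (β b) (α b), commutatorElement_mul_mem_center _ _ (h a) (h b)]

open scoped IsMulCommutative in
theorem pow_index_center_eq_one_of_mem_commutator [(Subgroup.center Q).FiniteIndex] {g : Q}
    (hg : g ∈ commutator Q) : g ^ (Subgroup.center Q).index = 1 := by
  have := Abelianization.commutator_subset_ker (MonoidHom.transferCenterPow Q) hg
  rw [MonoidHom.mem_ker, Subtype.ext_iff, MonoidHom.transferCenterPow_apply] at this
  exact this

end Commutator

section Presentation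

variable {X G : Type} [Group G] (π : FreeGroup X →* G)

def hopfH2 : Subgroup (FreeGroup X ⧸ relComm π) :=
  (π.ker ⊓ commutator (FreeGroup X)).map (QuotientGroup.mk' (relComm π))

theorem relComm_le_ker : relComm π ≤ π.ker :=
  Subgroup.commutator_le_left _ _

theorem relComm_le_commutator : relComm π ≤ commutator (FreeGroup X) :=
  Subgroup.commutator_mono le_top le_top

theorem hopfH2_le_relCoinv : hopfH2 π ≤ relCoinv π :=
  Subgroup.map_mono inf_le_left

theorem relCoinv_le_center : relCoinv π ≤ Subgroup.center (FreeGroup X ⧸ relComm π) := by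
  rintro _ ⟨r, hr, rfl⟩
  rw [Subgroup.mem_center_iff]
  intro q
  induction q using QuotientGroup.induction_on with
  | H f =>
    show ((f * r : FreeGroup X) : FreeGroup X ⧸ relComm π) = ((r * f : FreeGroup X) : _)
    rw [QuotientGroup.eq, show (f * r)⁻¹ * (r * f) = ⁅r⁻¹, f⁻¹⁆ by group]
    exact Subgroup.commutator_mem_commutator (π.ker.inv_mem hr) (Subgroup.mem_top _)

instance finiteIndex_relCoinv [Finite G] : (relCoinv π).FiniteIndex := by
  have hker : (QuotientGroup.mk' (relComm π)).ker ≤ π.ker := by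
    rw [QuotientGroup.ker_mk']
    exact relComm_le_ker π
  constructor
  rw [relCoinv, Subgroup.index_map_eq _ (QuotientGroup.mk'_surjective _) hker]
  exact Subgroup.index_ne_zero_of_finite

theorem mk_eq_mk_of_comp_eq {H : Type*} [Group H] {α β : H →* FreeGroup X}
    (h : π.comp α = π.comp β) {w : H} (hw : w ∈ commutator H) :
    (α w : FreeGroup X ⧸ relComm π) = β w := by
  refine commutator_le_eqLocus_of_inv_mul_mem_center ((QuotientGroup.mk' _).comp α)
    ((QuotientGroup.mk' _).comp β)
    (fun v => relCoinv_le_center π ⟨(β v)⁻¹ * α v, MonoidHom.mem_ker.mpr ?_, rfl⟩) hw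
  rw [map_mul, map_inv, ← MonoidHom.comp_apply, ← MonoidHom.comp_apply, h,
    inv_mul_cancel]

theorem map_relComm_le {Y : Type} {τ : FreeGroup Y →* G} {ψ : FreeGroup X →* FreeGroup Y}
    (h : τ.comp ψ = π) : (relComm π).map ψ ≤ relComm τ := by
  rw [relComm, relComm, Subgroup.map_commutator, ← h, ← MonoidHom.comap_ker]
  exact Subgroup.commutator_mono (Subgroup.map_comap_le _ _) le_top

theorem hopfH2_eq_bot_of_surjective {Y : Type} {τ : FreeGroup Y →* G}
    (hπ : Function.Surjective π) (hτ : Function.Surjective τ) (h : hopfH2 π = ⊥) :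
    hopfH2 τ = ⊥ := by
  obtain ⟨φ, hφ⟩ := FreeGroup.exists_comp_eq_of_surjective π hπ τ
  obtain ⟨ψ, hψ⟩ := FreeGroup.exists_comp_eq_of_surjective τ hτ π
  rw [eq_bot_iff]
  rintro _ ⟨w, ⟨hwR, hwF⟩, rfl⟩
  have hφw : (φ w : FreeGroup X ⧸ relComm π) ∈ hopfH2 π :=
    ⟨φ w, ⟨MonoidHom.mem_ker.mpr (by rw [← MonoidHom.comp_apply, hφ]; exact hwR),
      map_mem_commutator φ hwF⟩, rfl⟩
  rw [h, Subgroup.mem_bot, QuotientGroup.eq_one_iff] at hφw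
  have hψφw : ψ (φ w) ∈ relComm τ := map_relComm_le π hψ ⟨φ w, hφw, rfl⟩
  have hlift : τ.comp (ψ.comp φ) = τ.comp (MonoidHom.id _) := by
    rw [← MonoidHom.comp_assoc, hψ, hφ, MonoidHom.comp_id]
  rw [Subgroup.mem_bot, QuotientGroup.mk'_apply, ← MonoidHom.id_apply _ w,
    ← mk_eq_mk_of_comp_eq τ hlift hwF]
  exact (QuotientGroup.eq_one_iff _).mpr hψφw

theorem mem_hopfH2_of_isOfFinOrder {x : FreeGroup X ⧸ relComm π} (hx : x ∈ relCoinv π)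
    (hfin : IsOfFinOrder x) : x ∈ hopfH2 π := by
  obtain ⟨r, hr, rfl⟩ := hx
  obtain ⟨n, hn, hrn⟩ := isOfFinOrder_iff_pow_eq_one.mp hfin
  rw [QuotientGroup.mk'_apply, ← QuotientGroup.mk_pow, QuotientGroup.eq_one_iff] at hrn
  have hab : Abelianization.of r ^ n = 1 := by
    rw [← map_pow]
    exact (QuotientGroup.eq_one_iff _).mpr (relComm_le_commutator π hrn)
  have hab' : Abelianization.of r = 1 := pow_left_injective hn.ne' (hab.trans (one_pow n).symm)
  exact ⟨r, ⟨hr, (QuotientGroup.eq_one_iff r).mp hab'⟩, rfl⟩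

theorem isOfFinOrder_of_mem_hopfH2 [Finite G] {x : FreeGroup X ⧸ relComm π}
    (hx : x ∈ hopfH2 π) : IsOfFinOrder x := by
  obtain ⟨r, ⟨-, hrF⟩, rfl⟩ := hx
  have : (Subgroup.center (FreeGroup X ⧸ relComm π)).FiniteIndex :=
    Subgroup.finiteIndex_of_le (relCoinv_le_center π)
  exact isOfFinOrder_iff_pow_eq_one.mpr
    ⟨_, Nat.pos_of_ne_zero Subgroup.FiniteIndex.index_ne_zero,
      pow_index_center_eq_one_of_mem_commutator (map_mem_commutator _ hrF)⟩

theorem isOfFinOrder_iff_mem_hopfH2 [Finite G] {x : FreeGroup X ⧸ relComm π}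
    (hx : x ∈ relCoinv π) : IsOfFinOrder x ↔ x ∈ hopfH2 π :=
  ⟨mem_hopfH2_of_isOfFinOrder π hx, isOfFinOrder_of_mem_hopfH2 π⟩

theorem relCoinv_torsionFree_iff_hopfH2_eq_bot [Finite G] :
    (∀ g : relCoinv π, g ≠ 1 → ¬IsOfFinOrder g) ↔ hopfH2 π = ⊥ := by
  rw [Subgroup.eq_bot_iff_forall]
  constructor
  · intro htf x hx
    by_contra hne
    refine htf ⟨x, hopfH2_le_relCoinv π hx⟩ (fun h => hne (congrArg Subtype.val h)) ?_
    exact Submonoid.isOfFinOrder_coe.mp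
      ((isOfFinOrder_iff_mem_hopfH2 π (hopfH2_le_relCoinv π hx)).mpr hx)
  · intro h g hg hfin
    have := (isOfFinOrder_iff_mem_hopfH2 π g.2).mp (Submonoid.isOfFinOrder_coe.mpr hfin)
    exact hg (Subtype.ext (h _ this))

end Presentation

theorem finiteGroup_quasirational_iff_H2_trivial_general
    {X G : Type} [Group G] [Finite G] (π : FreeGroup X →* G)
    (hπ : Function.Surjective π) :
    (∀ g : ↥(relCoinv π), g ≠ 1 → ¬IsOfFinOrder g) ↔ H2Z G = ⊥ := by
  have hcanonical : Function.Surjective (FreeGroup.lift (id : G → G)) := fun g =>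
    ⟨FreeGroup.of g, by simp⟩
  rw [relCoinv_torsionFree_iff_hopfH2_eq_bot,
    show H2Z G = hopfH2 (FreeGroup.lift id) from rfl]
  exact ⟨hopfH2_eq_bot_of_surjective π hπ hcanonical,
    hopfH2_eq_bot_of_surjective _ hcanonical hπ⟩

theorem finiteGroup_quasirational_iff_H2_trivial
    {X G : Type} [Finite X] [Group G] [Finite G] (π : FreeGroup X →* G)
    (hπ : Function.Surjective π) :
    (∀ g : ↥(relCoinv π), g ≠ 1 → ¬IsOfFinOrder g) ↔ H2Z G = ⊥ :=
  finiteGroup_quasirational_iff_H2_trivial_general π hπ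
end

section
/- Let 1 → R → F → G → 1 be a presentation of a group G with F a free group on a finite set X and R a normal subgroup. Then there is an exact sequence of abelian groups 0 → H₂(G, ℤ) → R/[R,F] → ℤ^{X} → G^{ab} → 0, where the map R/[R,F] → ℤ^{X} is induced by the inclusion R → F followed by the abelianization F → F/[F,F] ≅ ℤ^{X}, and ℤ^{X} → G^{ab} is induced by the projection F → G. -/
/-- `(R ∩ [F,F])/[R,F] ⊆ F/[R,F]`; by Hopf's formula this is `H₂(G, ℤ)`. -/
def hopfSub {X G : Type} [Group G] (π : FreeGroup X →* G) :
    Subgroup (FreeGroup X ⧸ relComm π) :=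
  Subgroup.map (QuotientGroup.mk' (relComm π)) (π.ker ⊓ commutator (FreeGroup X))

/-- The abelianization `F → ℤ^X` of the free group, `x ↦ e_x`. -/
noncomputable def abF {X : Type} : FreeGroup X →* Multiplicative (X →₀ ℤ) :=
  FreeGroup.lift fun x => Multiplicative.ofAdd (Finsupp.single x 1)

theorem relComm_le_ker_abF {X G : Type} [Group G] (π : FreeGroup X →* G) :
    relComm π ≤ (abF (X := X)).ker :=
  le_trans (Subgroup.commutator_mono le_top le_top)
    (Abelianization.commutator_subset_ker abF)

/-- The induced map `F/[R,F] → ℤ^X`. -/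
noncomputable def abQ {X G : Type} [Group G] (π : FreeGroup X →* G) :
    (FreeGroup X ⧸ relComm π) →* Multiplicative (X →₀ ℤ) :=
  QuotientGroup.lift (relComm π) abF (relComm_le_ker_abF π)

/-- The map `ℤ^X → Gᵃᵇ` induced by `π`, sending `e_x` to the class of `π x`. -/
noncomputable def augAb {X G : Type} [Group G] (π : FreeGroup X →* G) :
    (X →₀ ℤ) →+ Additive (Abelianization G) :=
  Finsupp.liftAddHom fun x =>
    zmultiplesHom _ (Additive.ofMul (Abelianization.of (π (FreeGroup.of x))))

section CentralDifference
open scoped IsMulCommutative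
variable {F Q : Type*} [Group F] [Group Q]

def mulInvToCenter (f g : F →* Q) (h : ∀ w, f w * (g w)⁻¹ ∈ Subgroup.center Q) :
    F →* Subgroup.center Q where
  toFun w := ⟨f w * (g w)⁻¹, h w⟩
  map_one' := by simp
  map_mul' v w := Subtype.ext <| by
    simp only [map_mul, mul_inv_rev, Subgroup.coe_mul]
    rw [mul_assoc (f v) (g v)⁻¹, Subgroup.mem_center_iff.mp (h w) (g v)⁻¹]
    simp only [mul_assoc]

theorem eq_on_commutator_of_mul_inv_mem_center (f g : F →* Q)
    (h : ∀ w, f w * (g w)⁻¹ ∈ Subgroup.center Q) {w : F} (hw : w ∈ commutator F) :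
    f w = g w :=
  mul_inv_eq_one.mp (congrArg Subtype.val (Abelianization.commutator_subset_ker _ hw :
    mulInvToCenter f g h w = 1))

end CentralDifference

theorem map_commutator_le_commutator {H K : Type*} [Group H] [Group K] (f : H →* K) :
    (commutator H).map f ≤ commutator K := by
  rw [map_commutator_eq]
  exact Subgroup.commutator_mono le_top le_top

theorem map_commutator_of_surjective {H K : Type*} [Group H] [Group K] {f : H →* K}
    (hf : Function.Surjective f) : (commutator H).map f = commutator K := by
  rw [map_commutator_eq, MonoidHom.range_eq_top.mpr hf, commutator_def]

theorem FreeGroup.exists_comp_eq_of_surjective_s7 {Y H G : Type*} [Group H] [Group G]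
    {π : H →* G} (hπ : Function.Surjective π) (π' : FreeGroup Y →* G) :
    ∃ α : FreeGroup Y →* H, π.comp α = π' :=
  ⟨FreeGroup.lift (Function.surjInv hπ ∘ π' ∘ FreeGroup.of),
    FreeGroup.ext_hom _ _ fun y => by simp [Function.surjInv_eq hπ]⟩

section HopfFormula
open scoped commutatorElement
variable {X Y G : Type} [Group G]

theorem mk_mem_center_of_mem_ker (π : FreeGroup X →* G) {r : FreeGroup X} (hr : r ∈ π.ker) :
    (r : FreeGroup X ⧸ relComm π) ∈ Subgroup.center _ := by
  refine Subgroup.mem_center_iff.mpr fun q => QuotientGroup.induction_on q fun f => ?_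
  have hfr : ⁅f, r⁆ ∈ relComm π := by
    rw [relComm, Subgroup.commutator_comm]
    exact Subgroup.commutator_mem_commutator (Subgroup.mem_top f) hr
  refine commutatorElement_eq_one_iff_commute.mp ?_
  rw [← QuotientGroup.mk'_apply, ← QuotientGroup.mk'_apply, ← map_commutatorElement]
  exact (QuotientGroup.eq_one_iff _).mpr hfr

theorem mk_apply_eq_mk_of_mem_commutator (π : FreeGroup X →* G)
    (γ : FreeGroup X →* FreeGroup X) (hγ : π.comp γ = π) {w : FreeGroup X}
    (hw : w ∈ commutator (FreeGroup X)) :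
    (γ w : FreeGroup X ⧸ relComm π) = w := by
  refine eq_on_commutator_of_mul_inv_mem_center ((QuotientGroup.mk' _).comp γ)
    (QuotientGroup.mk' _) (fun v => ?_) hw
  rw [MonoidHom.comp_apply, ← map_inv, ← map_mul]
  refine mk_mem_center_of_mem_ker π ?_
  rw [MonoidHom.mem_ker, map_mul, map_inv, ← MonoidHom.comp_apply, hγ, mul_inv_cancel]

theorem relComm_le_comap (π₁ : FreeGroup X →* G) (π₂ : FreeGroup Y →* G)
    (α : FreeGroup X →* FreeGroup Y) (hα : π₂.comp α = π₁) :
    relComm π₁ ≤ (relComm π₂).comap α := by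
  rw [← Subgroup.map_le_iff_le_comap, relComm, relComm, Subgroup.map_commutator, ← hα,
    ← MonoidHom.comap_ker]
  exact Subgroup.commutator_mono (Subgroup.map_comap_le _ _) le_top

theorem mk_mem_hopfSub_of_comp_eq (π₁ : FreeGroup X →* G) (π₂ : FreeGroup Y →* G)
    (α : FreeGroup X →* FreeGroup Y) (hα : π₂.comp α = π₁) {w : FreeGroup X}
    (hw : w ∈ π₁.ker ⊓ commutator (FreeGroup X)) :
    (α w : FreeGroup Y ⧸ relComm π₂) ∈ hopfSub π₂ := by
  refine ⟨α w, ⟨MonoidHom.mem_ker.mpr ?_, map_commutator_le_commutator α ⟨w, hw.2, rfl⟩⟩, rfl⟩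
  rw [← MonoidHom.comp_apply, hα]
  exact hw.1

def hopfSubMap (π₁ : FreeGroup X →* G) (π₂ : FreeGroup Y →* G)
    (α : FreeGroup X →* FreeGroup Y) (hα : π₂.comp α = π₁) : hopfSub π₁ →* hopfSub π₂ :=
  MonoidHom.restrict (f := QuotientGroup.map _ _ α (relComm_le_comap π₁ π₂ α hα))
    (M' := (hopfSub π₁).toSubmonoid) (N' := (hopfSub π₂).toSubmonoid) <| by
    rintro _ ⟨w, hw, rfl⟩
    exact mk_mem_hopfSub_of_comp_eq π₁ π₂ α hα hw

theorem hopfSubMap_comp_eq_id (π₁ : FreeGroup X →* G) (π₂ : FreeGroup Y →* G)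
    (α : FreeGroup X →* FreeGroup Y) (hα : π₂.comp α = π₁)
    (β : FreeGroup Y →* FreeGroup X) (hβ : π₁.comp β = π₂) :
    (hopfSubMap π₂ π₁ β hβ).comp (hopfSubMap π₁ π₂ α hα) = MonoidHom.id _ := by
  ext ⟨_, w, ⟨-, hw⟩, rfl⟩
  exact mk_apply_eq_mk_of_mem_commutator π₁ (β.comp α)
    (by rw [← MonoidHom.comp_assoc, hβ, hα]) hw

theorem nonempty_hopfSub_mulEquiv {π₁ : FreeGroup X →* G} {π₂ : FreeGroup Y →* G}
    (hπ₁ : Function.Surjective π₁) (hπ₂ : Function.Surjective π₂) :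
    Nonempty (hopfSub π₁ ≃* hopfSub π₂) := by
  obtain ⟨α, hα⟩ := FreeGroup.exists_comp_eq_of_surjective_s7 hπ₂ π₁
  obtain ⟨β, hβ⟩ := FreeGroup.exists_comp_eq_of_surjective_s7 hπ₁ π₂
  exact ⟨(hopfSubMap π₁ π₂ α hα).toMulEquiv (hopfSubMap π₂ π₁ β hβ)
    (hopfSubMap_comp_eq_id π₁ π₂ α hα β hβ) (hopfSubMap_comp_eq_id π₂ π₁ β hβ α hα)⟩

theorem nonempty_hopfSub_mulEquiv_H2Z {π : FreeGroup X →* G} (hπ : Function.Surjective π) :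
    Nonempty (hopfSub π ≃* H2Z G) :=
  nonempty_hopfSub_mulEquiv hπ (FreeGroup.lift_surjective_of_surjective Function.surjective_id)

end HopfFormula

section Abelianization
variable {X G : Type} [Group G]

theorem augAb_toAdd_abF (π : FreeGroup X →* G) (w : FreeGroup X) :
    augAb π (Multiplicative.toAdd (abF w)) = Additive.ofMul (Abelianization.of (π w)) := by
  have h : (AddMonoidHom.toMultiplicativeLeft (augAb π)).comp abF = Abelianization.of.comp π :=
    FreeGroup.ext_hom _ _ fun x => by simp [abF, augAb]
  exact congrArg Additive.ofMul (DFunLike.congr_fun h w)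

theorem abF_eq_one_iff {w : FreeGroup X} : abF w = 1 ↔ w ∈ commutator (FreeGroup X) := by
  refine ⟨fun hw => ?_, fun hw => Abelianization.commutator_subset_ker abF hw⟩
  -- for the presentation `id`, `augAb ∘ abF` is the abelianization map of `F`
  have h := augAb_toAdd_abF (MonoidHom.id _) w
  rw [hw, toAdd_one, map_zero, eq_comm, ofMul_eq_zero, MonoidHom.id_apply] at h
  exact (QuotientGroup.eq_one_iff _).mp h

theorem abF_surjective : Function.Surjective (abF (X := X)) := by
  refine Multiplicative.ofAdd.surjective.forall.mpr fun v => ?_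
  induction v using Finsupp.induction with
  | zero => exact ⟨1, map_one _⟩
  | single_add x n v _ _ ih =>
    obtain ⟨w, hw⟩ := ih
    refine ⟨FreeGroup.of x ^ n * w, ?_⟩
    rw [map_mul, map_zpow, hw, abF, FreeGroup.lift_apply_of, ← ofAdd_zsmul, Finsupp.smul_single,
      smul_eq_mul, mul_one, ← ofAdd_add]

theorem abQ_mk (π : FreeGroup X →* G) (w : FreeGroup X) : abQ π w = abF w :=
  rfl

theorem abQ_eq_one_iff_mem_hopfSub (π : FreeGroup X →* G) {q : FreeGroup X ⧸ relComm π}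
    (hq : q ∈ relCoinv π) : abQ π q = 1 ↔ q ∈ hopfSub π := by
  obtain ⟨r, hr, rfl⟩ := hq
  constructor
  · intro h
    rw [QuotientGroup.mk'_apply, abQ_mk] at h
    exact ⟨r, ⟨hr, abF_eq_one_iff.mp h⟩, rfl⟩
  · rintro ⟨s, ⟨-, hs⟩, hsr⟩
    rw [← hsr, QuotientGroup.mk'_apply, abQ_mk]
    exact abF_eq_one_iff.mpr hs

theorem exists_abQ_eq_ofAdd_iff_augAb_eq_zero {π : FreeGroup X →* G}
    (hπ : Function.Surjective π) (v : X →₀ ℤ) :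
    (∃ q ∈ relCoinv π, abQ π q = Multiplicative.ofAdd v) ↔ augAb π v = 0 := by
  obtain ⟨w, hw⟩ := abF_surjective (Multiplicative.ofAdd v)
  obtain rfl : v = Multiplicative.toAdd (abF w) := by rw [hw, toAdd_ofAdd]
  rw [ofAdd_toAdd, augAb_toAdd_abF, ofMul_eq_zero, ← MonoidHom.mem_ker,
    Abelianization.ker_of, ← map_commutator_of_surjective hπ]
  constructor
  · rintro ⟨_, ⟨r, hr, rfl⟩, hrw⟩
    rw [QuotientGroup.mk'_apply, abQ_mk] at hrw
    refine ⟨r⁻¹ * w, abF_eq_one_iff.mp ?_, ?_⟩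
    · rw [map_mul, map_inv, hrw, inv_mul_cancel]
    · rw [map_mul, map_inv, hr, inv_one, one_mul]
  · rintro ⟨c, hc, hcw⟩
    refine ⟨_, ⟨w * c⁻¹, MonoidHom.mem_ker.mpr ?_, rfl⟩, ?_⟩
    · rw [map_mul, map_inv, hcw, mul_inv_cancel]
    · rw [QuotientGroup.mk'_apply, abQ_mk, map_mul, map_inv, abF_eq_one_iff.mpr hc, inv_one,
        mul_one]

theorem augAb_surjective {π : FreeGroup X →* G} (hπ : Function.Surjective π) :
    Function.Surjective (augAb π) := by
  have h : augAb π ∘ Multiplicative.toAdd ∘ abF = Additive.ofMul ∘ Abelianization.of ∘ π :=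
    funext (augAb_toAdd_abF π)
  exact .of_comp (g := Multiplicative.toAdd ∘ abF) <|
    h ▸ Additive.ofMul.surjective.comp ((QuotientGroup.mk'_surjective _).comp hπ)

end Abelianization

theorem crowell_lyndon_exact_sequence_general
    {X G : Type} [Group G] (π : FreeGroup X →* G)
    (hπ : Function.Surjective π) :
    -- `H₂(G,ℤ) = (R ∩ [F,F])/[R,F]` includes into `R/[R,F]` …
    hopfSub π ≤ relCoinv π ∧
    Nonempty (↥(hopfSub π) ≃* ↥(H2Z G)) ∧
    -- … exactness at `R/[R,F]` …
    (∀ q ∈ relCoinv π, (abQ π q = 1 ↔ q ∈ hopfSub π)) ∧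
    -- … exactness at `ℤ^X` …
    (∀ v : X →₀ ℤ,
      ((∃ q ∈ relCoinv π, abQ π q = Multiplicative.ofAdd v) ↔ augAb π v = 0)) ∧
    -- … and surjectivity onto `Gᵃᵇ`.
    Function.Surjective (augAb π) :=
  ⟨Subgroup.map_mono inf_le_left, nonempty_hopfSub_mulEquiv_H2Z hπ,
    fun _ => abQ_eq_one_iff_mem_hopfSub π, exists_abQ_eq_ofAdd_iff_augAb_eq_zero hπ,
    augAb_surjective hπ⟩

theorem crowell_lyndon_exact_sequence
    {X G : Type} [Finite X] [Group G] (π : FreeGroup X →* G)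
    (hπ : Function.Surjective π) :
    -- `H₂(G,ℤ) = (R ∩ [F,F])/[R,F]` includes into `R/[R,F]` …
    hopfSub π ≤ relCoinv π ∧
    Nonempty (↥(hopfSub π) ≃* ↥(H2Z G)) ∧
    -- … exactness at `R/[R,F]` …
    (∀ q ∈ relCoinv π, (abQ π q = 1 ↔ q ∈ hopfSub π)) ∧
    -- … exactness at `ℤ^X` …
    (∀ v : X →₀ ℤ,
      ((∃ q ∈ relCoinv π, abQ π q = Multiplicative.ofAdd v) ↔ augAb π v = 0)) ∧
    -- … and surjectivity onto `Gᵃᵇ`.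
    Function.Surjective (augAb π) :=
  crowell_lyndon_exact_sequence_general π hπ
end
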